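/- arXiv:1611.01944 — 8 statements merged into one kernel-verified Lean document; each statement's English description precedes it below -/
import Mathlib

section
/- For every pair of parameters w₀, γ ∈ ℝ there exists a solution with parameters (w₀,γ), and it is unique: any two continuously differentiable functions w₁, w₂ : [0,∞) → ℝ with w₁(0) = w₂(0) = w₀ and (σ²/2)·wᵢ′(x) + π(wᵢ(x)) + h(x) = γ for all x ≥ 0 coincide on [0,∞). -/
open Set MeasureTheory Filter Topology

/-- `piU U c w = min_{μ ∈ U} (μ·w + c(μ))`, realized as an infimum. -/
noncomputable def piU (U : Set ℝ) (c : ℝ → ℝ) (w : ℝ) : ℝ :=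
  sInf ((fun μ => μ * w + c μ) '' U)

/-- `w` is a continuously differentiable solution on `[0,∞)` of
`(σ²/2)·w′(x) + π(w(x)) + h(x) = γ` with `w(0) = w₀`, with derivative `w'`. -/
def IsSolution (σ : ℝ) (U : Set ℝ) (c h : ℝ → ℝ) (w₀ γ : ℝ) (w w' : ℝ → ℝ) : Prop :=
  w 0 = w₀ ∧ ContinuousOn w' (Set.Ici 0) ∧
  (∀ x ∈ Set.Ici (0:ℝ), HasDerivWithinAt w (w' x) (Set.Ici 0) x) ∧
  (∀ x ∈ Set.Ici (0:ℝ), σ ^ 2 / 2 * w' x + piU U c (w x) + h x = γ)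

/-! Since `U` is compact, `π` is a minimum of uniformly Lipschitz affine functions of `w`, hence
globally Lipschitz. The equation is thus `w' = (2/σ²)(γ - h(x) - π(w))` with a right-hand side
continuous in `x` and Lipschitz in `w` uniformly in `x`. For such a field Picard-Lindelöf gives
solutions on intervals whose length depends only on the Lipschitz constant, so concatenating
them yields a solution on `[0, ∞)`; uniqueness is the Grönwall estimate behind
`ODE_solution_unique`. -/

open scoped NNReal

theorem lipschitzWith_piU {U : Set ℝ} (hUne : U.Nonempty) (hUcpt : IsCompact U) {c : ℝ → ℝ}
    (hc : Continuous c) {L : ℝ≥0} (hL : ∀ μ ∈ U, |μ| ≤ L) : LipschitzWith L (piU U c) := by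
  refine LipschitzWith.of_le_add_mul L fun w₁ w₂ => ?_
  have hbdd : BddBelow ((fun μ => μ * w₁ + c μ) '' U) :=
    (hUcpt.image (by fun_prop)).bddBelow
  suffices piU U c w₁ - L * dist w₁ w₂ ≤ piU U c w₂ by linarith
  refine le_csInf (hUne.image _) ?_
  rintro _ ⟨μ, hμ, rfl⟩
  have hmin : piU U c w₁ ≤ μ * w₁ + c μ := csInf_le hbdd (mem_image_of_mem _ hμ)
  have hlin : μ * (w₁ - w₂) ≤ L * dist w₁ w₂ := by
    rw [Real.dist_eq]
    calc μ * (w₁ - w₂) ≤ |μ| * |w₁ - w₂| := (le_abs_self _).trans (abs_mul _ _).le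
      _ ≤ L * |w₁ - w₂| := by gcongr; exact hL μ hμ
  linarith

theorem exists_lipschitzWith_piU {U : Set ℝ} (hUne : U.Nonempty) (hUcpt : IsCompact U)
    {c : ℝ → ℝ} (hc : Continuous c) : ∃ L, LipschitzWith L (piU U c) := by
  obtain ⟨L, hL⟩ := hUcpt.isBounded.exists_norm_le
  exact ⟨L.toNNReal,
    lipschitzWith_piU hUne hUcpt hc fun μ hμ => (hL μ hμ).trans (Real.le_coe_toNNReal L)⟩

section GlobalODE

variable {E : Type*} [NormedAddCommGroup E] [NormedSpace ℝ E] {v : ℝ → E → E} {K : ℝ≥0}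

theorem ODE_solution_unique_Icc (hv : ∀ t, LipschitzWith K (v t)) {f g : ℝ → E} {a b : ℝ}
    (hf : ∀ t ∈ Icc a b, HasDerivWithinAt f (v t (f t)) (Icc a b) t)
    (hg : ∀ t ∈ Icc a b, HasDerivWithinAt g (v t (g t)) (Icc a b) t) (ha : f a = g a) :
    EqOn f g (Icc a b) := by
  have hIci : ∀ t ∈ Ico a b, Icc a b ∈ 𝓝[≥] t := fun t ht =>
    ordConnected_Icc.mem_nhdsGE (Ico_subset_Icc_self ht) ⟨ht.1.trans ht.2.le, le_rfl⟩ ht.2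
  exact ODE_solution_unique hv (fun t ht => (hf t ht).continuousWithinAt)
    (fun t ht => (hf t (Ico_subset_Icc_self ht)).mono_of_mem_nhdsWithin (hIci t ht))
    (fun t ht => (hg t ht).continuousWithinAt)
    (fun t ht => (hg t (Ico_subset_Icc_self ht)).mono_of_mem_nhdsWithin (hIci t ht)) ha

theorem ODE_solution_unique_Ici (hv : ∀ t, LipschitzWith K (v t)) {f g : ℝ → E} {a : ℝ}
    (hf : ∀ t ∈ Ici a, HasDerivWithinAt f (v t (f t)) (Ici a) t)
    (hg : ∀ t ∈ Ici a, HasDerivWithinAt g (v t (g t)) (Ici a) t) (ha : f a = g a) :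
    EqOn f g (Ici a) := fun _ hx =>
  ODE_solution_unique_Icc hv (fun t ht => (hf t ht.1).mono Icc_subset_Ici_self)
    (fun t ht => (hg t ht.1).mono Icc_subset_Ici_self) ha ⟨hx, le_rfl⟩

theorem forall_mem_Icc_hasDerivWithinAt_ite {f g : ℝ → E} {a b c : ℝ} (hfg : f b = g b)
    (hf : ∀ t ∈ Icc a b, HasDerivWithinAt f (v t (f t)) (Icc a b) t)
    (hg : ∀ t ∈ Icc b c, HasDerivWithinAt g (v t (g t)) (Icc b c) t) :
    ∀ t ∈ Icc a c, HasDerivWithinAt (fun s => if s ≤ b then f s else g s)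
      (v t (if t ≤ b then f t else g t)) (Icc a c) t := by
  set F := fun s => if s ≤ b then f s else g s
  have hFf : EqOn F f (Icc a b) := fun s hs => if_pos hs.2
  have hFg : EqOn F g (Icc b c) := fun s hs => by
    rcases hs.1.eq_or_lt with rfl | hbs
    · simp [F, hfg]
    · exact if_neg hbs.not_ge
  intro t ht
  have hleft : HasDerivWithinAt F (v t (F t)) (Icc a b) t := by
    by_cases htb : t ≤ b
    · rw [hFf ⟨ht.1, htb⟩]
      exact (hf t ⟨ht.1, htb⟩).congr hFf (hFf ⟨ht.1, htb⟩)
    · exact HasFDerivWithinAt.of_notMem_closure fun hmem => htb (isClosed_Icc.closure_subset hmem).2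
  have hright : HasDerivWithinAt F (v t (F t)) (Icc b c) t := by
    by_cases hbt : b ≤ t
    · rw [hFg ⟨hbt, ht.2⟩]
      exact (hg t ⟨hbt, ht.2⟩).congr hFg (hFg ⟨hbt, ht.2⟩)
    · exact HasFDerivWithinAt.of_notMem_closure fun hmem => hbt (isClosed_Icc.closure_subset hmem).1
  refine (hleft.union hright).mono fun s hs => ?_
  rcases le_total s b with hsb | hbs
  · exact Or.inl ⟨hs.1, hsb⟩
  · exact Or.inr ⟨hbs, hs.2⟩

variable [CompleteSpace E]

theorem exists_eq_forall_mem_Icc_hasDerivWithinAt_of_mul_le (hv : ∀ t, LipschitzWith K (v t))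
    (hvc : ∀ x, Continuous (v · x)) {τ : ℝ≥0} (hKτ : 2 * K * τ ≤ 1) (a : ℝ) (x₀ : E) :
    ∃ f : ℝ → E, f a = x₀ ∧
      ∀ t ∈ Icc a (a + τ), HasDerivWithinAt f (v t (f t)) (Icc a (a + τ)) t := by
  obtain ⟨M, hM⟩ := isCompact_Icc.exists_bound_of_continuousOn (hvc x₀).continuousOn
    (s := Icc a (a + τ))
  -- On the ball of radius `2 M τ` the field is bounded by `M + K (2 M τ) ≤ 2 M`.
  have hpl : IsPicardLindelof v (tmin := a) (tmax := a + τ) ⟨a, left_mem_Icc.2 (by simp)⟩ x₀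
      (2 * M.toNNReal * τ) 0 (2 * M.toNNReal) K :=
    { lipschitzOnWith := fun t _ => (hv t).lipschitzOnWith
      continuousOn := fun x _ => (hvc x).continuousOn
      norm_le := fun t ht x hx => by
        have hdist : ‖v t x - v t x₀‖ ≤ K * (2 * M.toNNReal * τ) := by
          rw [← dist_eq_norm]
          exact ((hv t).dist_le_mul x x₀).trans
            (by gcongr; exact_mod_cast Metric.mem_closedBall.1 hx)
        have hKM : (K : ℝ) * (2 * M.toNNReal * τ) ≤ M.toNNReal := by
          have : (2 * K * τ : ℝ) ≤ 1 := by exact_mod_cast hKτ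
          nlinarith [(M.toNNReal : ℝ≥0).coe_nonneg]
        calc ‖v t x‖ ≤ ‖v t x₀‖ + ‖v t x - v t x₀‖ := norm_le_norm_add_norm_sub' ..
          _ ≤ M.toNNReal + M.toNNReal := add_le_add ((hM t ht).trans (Real.le_coe_toNNReal M))
              (hdist.trans hKM)
          _ = ↑(2 * M.toNNReal) := by push_cast; ring
      mul_max_le := by simp [mul_comm] }
  exact hpl.exists_eq_forall_mem_Icc_hasDerivWithinAt₀

theorem exists_eq_forall_mem_Icc_hasDerivWithinAt_of_lipschitzWith
    (hv : ∀ t, LipschitzWith K (v t)) (hvc : ∀ x, Continuous (v · x)) (a T : ℝ) (x₀ : E) :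
    ∃ f : ℝ → E, f a = x₀ ∧ ∀ t ∈ Icc a T, HasDerivWithinAt f (v t (f t)) (Icc a T) t := by
  set τ : ℝ≥0 := (2 * (K + 1))⁻¹
  have hKτ : 2 * K * τ ≤ 1 := by
    rw [← div_eq_mul_inv, div_le_one (by positivity)]
    gcongr
    exact le_self_add
  -- Picard-Lindelöf applies on intervals of length `τ`; concatenate `n` of them.
  have hsteps : ∀ n : ℕ, ∃ f : ℝ → E, f a = x₀ ∧
      ∀ t ∈ Icc a (a + n * τ), HasDerivWithinAt f (v t (f t)) (Icc a (a + n * τ)) t := by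
    intro n
    induction n with
    | zero =>
      simpa using exists_eq_forall_mem_Icc_hasDerivWithinAt_of_mul_le hv hvc (τ := 0) (by simp) a x₀
    | succ n ih =>
      obtain ⟨f, hfa, hf⟩ := ih
      obtain ⟨g, hgb, hg⟩ :=
        exists_eq_forall_mem_Icc_hasDerivWithinAt_of_mul_le hv hvc hKτ (a + n * τ) (f (a + n * τ))
      have hend : a + ((n + 1 : ℕ) : ℝ) * τ = a + n * τ + τ := by push_cast; ring
      refine ⟨_, ?_, hend ▸ forall_mem_Icc_hasDerivWithinAt_ite hgb.symm hf hg⟩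
      simp only [le_add_iff_nonneg_right]
      rw [if_pos (by positivity), hfa]
  obtain ⟨n, hn⟩ := exists_nat_ge ((T - a) / τ)
  obtain ⟨f, hfa, hf⟩ := hsteps n
  have hT : Icc a T ⊆ Icc a (a + n * τ) := by
    refine Icc_subset_Icc_right ?_
    rw [div_le_iff₀ (by positivity)] at hn
    linarith
  exact ⟨f, hfa, fun t ht => (hf t (hT ht)).mono hT⟩

theorem exists_eq_forall_mem_Ici_hasDerivWithinAt_of_lipschitzWith
    (hv : ∀ t, LipschitzWith K (v t)) (hvc : ∀ x, Continuous (v · x)) (a : ℝ) (x₀ : E) :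
    ∃ f : ℝ → E, f a = x₀ ∧ ∀ t ∈ Ici a, HasDerivWithinAt f (v t (f t)) (Ici a) t := by
  choose F hFa hF using fun n : ℕ =>
    exists_eq_forall_mem_Icc_hasDerivWithinAt_of_lipschitzWith hv hvc a (a + n) x₀
  have hcons : ∀ m n : ℕ, n ≤ m → EqOn (F m) (F n) (Icc a (a + n)) := fun m n hnm => by
    have hsub : Icc a (a + n) ⊆ Icc a (a + m) := Icc_subset_Icc_right (by gcongr)
    exact ODE_solution_unique_Icc hv (fun t ht => (hF m t (hsub ht)).mono hsub) (hF n)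
      ((hFa m).trans (hFa n).symm)
  set N : ℝ → ℕ := fun t => ⌈t - a⌉₊ + 1
  have hN : ∀ t, t < a + N t := fun t => by
    have := Nat.le_ceil (t - a)
    simp only [N]; push_cast; linarith
  refine ⟨fun t => F (N t) t, hFa _, fun t ht => ?_⟩
  have hfF : EqOn (fun s => F (N s) s) (F (N t)) (Icc a (a + N t)) := fun s hs => by
    rcases le_total (N s) (N t) with hst | hts
    · exact (hcons _ _ hst ⟨hs.1, (hN s).le⟩).symm
    · exact hcons _ _ hts hs
  have hnhds : Icc a (a + N t) ∈ 𝓝[Ici a] t := by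
    rw [← Ici_inter_Iic]
    exact inter_mem_nhdsWithin _ (Iic_mem_nhds (hN t))
  exact ((hF (N t) t ⟨ht, (hN t).le⟩).mono_of_mem_nhdsWithin hnhds).congr_of_eventuallyEq
    (eventuallyEq_of_mem hnhds hfF) rfl

end GlobalODE

theorem stmt_3_general (σ : ℝ) (hσ : 0 < σ) (U : Set ℝ) (hUne : U.Nonempty) (hUcpt : IsCompact U)
    (c : ℝ → ℝ) (hc : Continuous c) (h : ℝ → ℝ)
    (hhcont : ContinuousOn h (Set.Ici 0))
    (w₀ γ : ℝ) :
    (∃ w w' : ℝ → ℝ, IsSolution σ U c h w₀ γ w w') ∧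
    (∀ w₁ w₁' w₂ w₂' : ℝ → ℝ, IsSolution σ U c h w₀ γ w₁ w₁' →
      IsSolution σ U c h w₀ γ w₂ w₂' → ∀ x : ℝ, 0 ≤ x → w₁ x = w₂ x) := by
  obtain ⟨L, hπ⟩ := exists_lipschitzWith_piU hUne hUcpt hc
  -- `h` extended to the left by `h 0`, so that the vector field is defined for all times.
  have hH : Continuous fun t => h (max t 0) :=
    hhcont.comp_continuous (by fun_prop) fun t => le_max_right t 0
  set v : ℝ → ℝ → ℝ := fun t y => 2 / σ ^ 2 * (γ - h (max t 0) - piU U c y)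
  have hv : ∀ t, LipschitzWith (‖2 / σ ^ 2‖₊ * (0 + L)) (v t) := fun t =>
    (lipschitzWith_smul _).comp ((LipschitzWith.const _).sub hπ)
  have hvc : ∀ y, Continuous (v · y) := fun _ =>
    continuous_const.mul ((continuous_const.sub hH).sub continuous_const)
  have hequation : ∀ x ∈ Ici (0 : ℝ), ∀ d y, σ ^ 2 / 2 * d + piU U c y + h x = γ ↔ d = v x y := by
    intro x (hx : 0 ≤ x) d y
    simp only [v, max_eq_left hx]
    field_simp
    constructor <;> intro <;> linarith
  constructor
  · obtain ⟨w, hw0, hw⟩ := exists_eq_forall_mem_Ici_hasDerivWithinAt_of_lipschitzWith hv hvc 0 w₀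
    have hwc : ContinuousOn w (Ici 0) := fun t ht => (hw t ht).continuousWithinAt
    refine ⟨w, fun x => v x (w x), hw0, ?_, hw, fun x hx => (hequation x hx _ _).2 rfl⟩
    exact continuousOn_const.mul
      ((continuousOn_const.sub hH.continuousOn).sub (hπ.continuous.comp_continuousOn hwc))
  · rintro w₁ w₁' w₂ w₂' ⟨hw₁0, -, hw₁, hw₁eq⟩ ⟨hw₂0, -, hw₂, hw₂eq⟩ x hx
    refine ODE_solution_unique_Ici hv (fun t ht => ?_) (fun t ht => ?_) (hw₁0.trans hw₂0.symm) hx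
    · exact (hequation t ht _ _).1 (hw₁eq t ht) ▸ hw₁ t ht
    · exact (hequation t ht _ _).1 (hw₂eq t ht) ▸ hw₂ t ht

theorem stmt_3 (σ : ℝ) (hσ : 0 < σ) (U : Set ℝ) (hUne : U.Nonempty) (hUcpt : IsCompact U)
    (c : ℝ → ℝ) (hc : Continuous c) (h : ℝ → ℝ)
    (hhcont : ContinuousOn h (Set.Ici 0)) (hhmono : StrictMonoOn h (Set.Ici 0))
    (hh0 : h 0 = 0) (hhtop : Filter.Tendsto h Filter.atTop Filter.atTop)
    (w₀ γ : ℝ) :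
    (∃ w w' : ℝ → ℝ, IsSolution σ U c h w₀ γ w w') ∧
    (∀ w₁ w₁' w₂ w₂' : ℝ → ℝ, IsSolution σ U c h w₀ γ w₁ w₁' →
      IsSolution σ U c h w₀ γ w₂ w₂' → ∀ x : ℝ, 0 ≤ x → w₁ x = w₂ x) :=
  stmt_3_general σ hσ U hUne hUcpt c hc h hhcont w₀ γ
end

section
/- Denote by w(x; w₀, γ) the value at x of the unique solution with parameters (w₀,γ). Then for each fixed x ≥ 0, the map (w₀,γ) ↦ w(x; w₀, γ) is continuous on ℝ², and the map (x, w₀, γ) ↦ w′(x; w₀, γ) is continuous in each of x ∈ [0,∞), w₀ ∈ ℝ, and γ ∈ ℝ. -/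
open Set MeasureTheory Filter Topology

lemma piU_attained (U : Set ℝ) (hUne : U.Nonempty) (hUcpt : IsCompact U)
    (c : ℝ → ℝ) (hc : Continuous c) (w : ℝ) :
    ∃ μ ∈ U, piU U c w = μ * w + c μ ∧ ∀ ν ∈ U, μ * w + c μ ≤ ν * w + c ν := by
  obtain ⟨μ, hμU, hmin⟩ := hUcpt.exists_isMinOn hUne
    ((continuous_id.mul continuous_const |>.add hc).continuousOn)
  refine ⟨μ, hμU, ?_, fun ν hν => hmin hν⟩
  refine (IsLeast.csInf_eq ⟨⟨μ, hμU, rfl⟩, ?_⟩)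
  rintro y ⟨ν, hν, rfl⟩
  exact hmin hν

lemma piU_lipschitz {U : Set ℝ} (hUne : U.Nonempty) (hUcpt : IsCompact U)
    {c : ℝ → ℝ} (hc : Continuous c) {M : ℝ} (hM : ∀ μ ∈ U, |μ| ≤ M) :
    ∀ w v : ℝ, |piU U c w - piU U c v| ≤ M * |w - v| := by
  have key : ∀ w v : ℝ, piU U c w - piU U c v ≤ M * |w - v| := by
    intro w v
    obtain ⟨μ, hμU, hval, hmin⟩ := piU_attained U hUne hUcpt c hc v
    have hle : piU U c w ≤ μ * w + c μ :=
      csInf_le (hUcpt.image (by fun_prop)).bddBelow ⟨μ, hμU, rfl⟩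
    calc piU U c w - piU U c v ≤ (μ * w + c μ) - (μ * v + c μ) := by
            rw [hval]; linarith
      _ = μ * (w - v) := by ring
      _ ≤ |μ * (w - v)| := le_abs_self _
      _ = |μ| * |w - v| := abs_mul _ _
      _ ≤ M * |w - v| := by
            have := hM μ hμU
            exact mul_le_mul_of_nonneg_right this (abs_nonneg _)
  intro w v
  rw [abs_sub_le_iff]
  constructor
  · exact key w v
  · rw [abs_sub_comm]; exact key v w

theorem stmt_4 (σ : ℝ) (hσ : 0 < σ) (U : Set ℝ) (hUne : U.Nonempty) (hUcpt : IsCompact U)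
    (c : ℝ → ℝ) (hc : Continuous c) (h : ℝ → ℝ)
    (hhcont : ContinuousOn h (Set.Ici 0)) (hhmono : StrictMonoOn h (Set.Ici 0))
    (hh0 : h 0 = 0) (hhtop : Filter.Tendsto h Filter.atTop Filter.atTop)
    (sol sol' : ℝ → ℝ → ℝ → ℝ)
    (hsol : ∀ w₀ γ : ℝ, IsSolution σ U c h w₀ γ (sol w₀ γ) (sol' w₀ γ)) :
    (∀ x : ℝ, 0 ≤ x → Continuous (fun p : ℝ × ℝ => sol p.1 p.2 x)) ∧
    (∀ w₀ γ : ℝ, ContinuousOn (fun x => sol' w₀ γ x) (Set.Ici 0)) ∧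
    (∀ x : ℝ, 0 ≤ x → ∀ γ : ℝ, Continuous (fun w₀ => sol' w₀ γ x)) ∧
    (∀ x : ℝ, 0 ≤ x → ∀ w₀ : ℝ, Continuous (fun γ => sol' w₀ γ x)) := by
  obtain ⟨μ₀, hμ₀U, hmax⟩ := hUcpt.exists_isMaxOn hUne continuous_abs.continuousOn
  set M : ℝ := |μ₀| with hMdef
  have hM : ∀ μ ∈ U, |μ| ≤ M := fun μ hμ => hmax hμ
  have hM0 : 0 ≤ M := abs_nonneg _
  have hσ2 : (0:ℝ) < σ ^ 2 := by positivity
  have hσ2' : σ ^ 2 ≠ 0 := ne_of_gt hσ2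
  set K : ℝ := 2 / σ ^ 2 * M with hKdef
  have hK0 : 0 ≤ K := by positivity
  have hLip := piU_lipschitz hUne hUcpt hc hM
  -- the solution is continuous in x on [0, ∞)
  have hcsol : ∀ w₀ γ : ℝ, ContinuousOn (sol w₀ γ) (Set.Ici 0) :=
    fun w₀ γ t ht => ((hsol w₀ γ).2.2.1 t ht).continuousWithinAt
  -- formula for the derivative
  have hform : ∀ w₀ γ x : ℝ, 0 ≤ x →
      sol' w₀ γ x = 2 / σ ^ 2 * (γ - h x - piU U c (sol w₀ γ x)) := by
    intro w₀ γ x hx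
    have := (hsol w₀ γ).2.2.2 x hx
    field_simp
    linarith
  -- key Grönwall estimate
  have key : ∀ (p q : ℝ × ℝ) (x : ℝ), 0 ≤ x →
      |sol p.1 p.2 x - sol q.1 q.2 x| ≤
        gronwallBound (|p.1 - q.1|) K (2 / σ ^ 2 * |p.2 - q.2|) x := by
    intro p q x hx
    have H := norm_le_gronwallBound_of_norm_deriv_right_le (a := 0) (b := x)
      (f := fun t => sol p.1 p.2 t - sol q.1 q.2 t)
      (f' := fun t => sol' p.1 p.2 t - sol' q.1 q.2 t)
      (δ := |p.1 - q.1|) (K := K) (ε := 2 / σ ^ 2 * |p.2 - q.2|)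
      (((hcsol p.1 p.2).mono Icc_subset_Ici_self).sub
        ((hcsol q.1 q.2).mono Icc_subset_Ici_self))
      (fun t ht => (((hsol p.1 p.2).2.2.1 t ht.1).mono (Ici_subset_Ici.mpr ht.1)).sub
        (((hsol q.1 q.2).2.2.1 t ht.1).mono (Ici_subset_Ici.mpr ht.1)))
      (by
        simp only [(hsol p.1 p.2).1, (hsol q.1 q.2).1, Real.norm_eq_abs]
        exact le_refl _)
      (by
        intro t ht
        have ht0 : (0:ℝ) ≤ t := ht.1
        have e1 : sol' p.1 p.2 t - sol' q.1 q.2 t =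
            2 / σ ^ 2 * ((p.2 - q.2) -
              (piU U c (sol p.1 p.2 t) - piU U c (sol q.1 q.2 t))) := by
          rw [hform p.1 p.2 t ht0, hform q.1 q.2 t ht0]; ring
        simp only [Real.norm_eq_abs]
        show |sol' p.1 p.2 t - sol' q.1 q.2 t| ≤
          K * |sol p.1 p.2 t - sol q.1 q.2 t| + 2 / σ ^ 2 * |p.2 - q.2|
        rw [e1, abs_mul]
        have h2 : |(2:ℝ) / σ ^ 2| = 2 / σ ^ 2 := abs_of_pos (by positivity)
        rw [h2]
        have h3 : |(p.2 - q.2) - (piU U c (sol p.1 p.2 t) - piU U c (sol q.1 q.2 t))| ≤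
            |p.2 - q.2| + M * |sol p.1 p.2 t - sol q.1 q.2 t| :=
          le_trans (abs_sub _ _) (by
            have := hLip (sol p.1 p.2 t) (sol q.1 q.2 t)
            linarith)
        have h4 : (0:ℝ) ≤ 2 / σ ^ 2 := by positivity
        calc 2 / σ ^ 2 * |(p.2 - q.2) - (piU U c (sol p.1 p.2 t) - piU U c (sol q.1 q.2 t))|
            ≤ 2 / σ ^ 2 * (|p.2 - q.2| + M * |sol p.1 p.2 t - sol q.1 q.2 t|) :=
              mul_le_mul_of_nonneg_left h3 h4
          _ = K * |sol p.1 p.2 t - sol q.1 q.2 t| + 2 / σ ^ 2 * |p.2 - q.2| := by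
              rw [hKdef]; ring)
    have := H x ⟨hx, le_refl x⟩
    simpa [Real.norm_eq_abs] using this
  -- continuity of the gronwall bound in (δ, ε)
  have hgbc : ∀ x : ℝ, Continuous (fun d : ℝ × ℝ => gronwallBound d.1 K d.2 x) := by
    intro x
    by_cases hK : K = 0
    · simp only [gronwallBound, if_pos hK]; fun_prop
    · simp only [gronwallBound, if_neg hK]; fun_prop
  -- part 1
  have part1 : ∀ x : ℝ, 0 ≤ x → Continuous (fun p : ℝ × ℝ => sol p.1 p.2 x) := by
    intro x hx
    rw [continuous_iff_continuousAt]
    intro p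
    rw [ContinuousAt, tendsto_iff_dist_tendsto_zero]
    have hpair : Continuous (fun q : ℝ × ℝ => ((|q.1 - p.1|, 2 / σ ^ 2 * |q.2 - p.2|) : ℝ × ℝ)) := by
      fun_prop
    have hg : Continuous (fun q : ℝ × ℝ =>
        gronwallBound (|q.1 - p.1|) K (2 / σ ^ 2 * |q.2 - p.2|) x) :=
      (hgbc x).comp hpair
    have hgp : gronwallBound (|p.1 - p.1|) K (2 / σ ^ 2 * |p.2 - p.2|) x = 0 := by
      simp [gronwallBound_ε0_δ0]
    have hb : ∀ q : ℝ × ℝ, dist (sol q.1 q.2 x) (sol p.1 p.2 x) ≤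
        gronwallBound (|q.1 - p.1|) K (2 / σ ^ 2 * |q.2 - p.2|) x := by
      intro q; rw [Real.dist_eq]; exact key q p x hx
    have hg0 : Tendsto (fun q : ℝ × ℝ =>
        gronwallBound (|q.1 - p.1|) K (2 / σ ^ 2 * |q.2 - p.2|) x) (𝓝 p) (𝓝 0) := by
      have := hg.continuousAt (x := p)
      rwa [ContinuousAt, hgp] at this
    exact squeeze_zero (fun q => dist_nonneg) hb hg0
  -- continuity of piU
  have hπ : Continuous (piU U c) := by
    have : LipschitzWith (Real.toNNReal M) (piU U c) := by
      apply LipschitzWith.of_dist_le_mul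
      intro a b
      rw [Real.dist_eq, Real.dist_eq]
      calc |piU U c a - piU U c b| ≤ M * |a - b| := hLip a b
        _ ≤ (Real.toNNReal M : ℝ) * |a - b| := by
            have : M ≤ (Real.toNNReal M : ℝ) := Real.le_coe_toNNReal M
            exact mul_le_mul_of_nonneg_right this (abs_nonneg _)
    exact this.continuous
  refine ⟨part1, fun w₀ γ => (hsol w₀ γ).2.1, ?_, ?_⟩
  · intro x hx γ
    have heq : (fun w₀ => sol' w₀ γ x) =
        fun w₀ => 2 / σ ^ 2 * (γ - h x - piU U c (sol w₀ γ x)) :=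
      funext fun w₀ => hform w₀ γ x hx
    rw [heq]
    have hs : Continuous (fun w₀ : ℝ => sol w₀ γ x) :=
      (part1 x hx).comp (continuous_id.prodMk continuous_const)
    exact continuous_const.mul ((continuous_const.sub (hπ.comp hs)))
  · intro x hx w₀
    have heq : (fun γ => sol' w₀ γ x) =
        fun γ => 2 / σ ^ 2 * (γ - h x - piU U c (sol w₀ γ x)) :=
      funext fun γ => hform w₀ γ x hx
    rw [heq]
    have hs : Continuous (fun γ : ℝ => sol w₀ γ x) :=
      (part1 x hx).comp (continuous_const.prodMk continuous_id)
    exact continuous_const.mul ((continuous_id.sub continuous_const).sub (hπ.comp hs))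
end

section
/- Solutions are strictly increasing in the parameter γ: if γ₁ < γ₂, w₀ ∈ ℝ, and w₁, w₂ are solutions with parameters (w₀,γ₁) and (w₀,γ₂) respectively, then w₁(x) < w₂(x) for every x > 0. -/
open Set MeasureTheory Filter Topology

/-- At a zero with positive (within-)derivative, `g` is positive just to the right. -/
lemma aux_right_pos {g : ℝ → ℝ} {d t b : ℝ} (hd : 0 < d) (ht : 0 ≤ t) (htb : t < b)
    (hder : HasDerivWithinAt g d (Set.Ici 0) t) (hgt : g t = 0) :
    ∃ y, t < y ∧ y < b ∧ 0 < g y := by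
  have h1 : Tendsto (slope g t) (𝓝[Set.Ici 0 \ {t}] t) (𝓝 d) :=
    hasDerivWithinAt_iff_tendsto_slope.mp hder
  have hsub : Set.Ioo t b ⊆ Set.Ici 0 \ {t} := fun y hy =>
    ⟨le_trans ht hy.1.le, by simp [ne_of_gt hy.1]⟩
  have h2 : Tendsto (slope g t) (𝓝[Set.Ioo t b] t) (𝓝 d) :=
    h1.mono_left (nhdsWithin_mono _ hsub)
  have hne : (𝓝[Set.Ioo t b] t).NeBot := by
    apply mem_closure_iff_nhdsWithin_neBot.mp
    rw [closure_Ioo (ne_of_lt htb)]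
    exact ⟨le_refl t, htb.le⟩
  have h3 : ∀ᶠ y in 𝓝[Set.Ioo t b] t, 0 < slope g t y := h2.eventually (eventually_gt_nhds hd)
  obtain ⟨y, hy1, hy2⟩ := (h3.and eventually_mem_nhdsWithin).exists
  refine ⟨y, hy2.1, hy2.2, ?_⟩
  rw [slope_def_field, hgt, sub_zero] at hy1
  have hyt : 0 < y - t := sub_pos.mpr hy2.1
  have := mul_pos hy1 hyt
  rwa [div_mul_cancel₀ _ (ne_of_gt hyt)] at this

/-- At a zero with positive derivative (at an interior point), `g` is negative just to the left. -/
lemma aux_left_neg {g : ℝ → ℝ} {d x₀ : ℝ} (hd : 0 < d) (hx : 0 < x₀)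
    (hder : HasDerivWithinAt g d (Set.Ici 0) x₀) (hgx : g x₀ = 0) :
    ∃ y, 0 < y ∧ y < x₀ ∧ g y < 0 := by
  have h1 : Tendsto (slope g x₀) (𝓝[Set.Ici 0 \ {x₀}] x₀) (𝓝 d) :=
    hasDerivWithinAt_iff_tendsto_slope.mp hder
  have hsub : Set.Ioo 0 x₀ ⊆ Set.Ici 0 \ {x₀} := fun y hy =>
    ⟨hy.1.le, by simp [ne_of_lt hy.2]⟩
  have h2 : Tendsto (slope g x₀) (𝓝[Set.Ioo 0 x₀] x₀) (𝓝 d) :=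
    h1.mono_left (nhdsWithin_mono _ hsub)
  have hne : (𝓝[Set.Ioo 0 x₀] x₀).NeBot := by
    apply mem_closure_iff_nhdsWithin_neBot.mp
    rw [closure_Ioo hx.ne]
    exact ⟨hx.le, le_refl x₀⟩
  have h3 : ∀ᶠ y in 𝓝[Set.Ioo 0 x₀] x₀, 0 < slope g x₀ y :=
    h2.eventually (eventually_gt_nhds hd)
  obtain ⟨y, hy1, hy2⟩ := (h3.and eventually_mem_nhdsWithin).exists
  refine ⟨y, hy2.1, hy2.2, ?_⟩
  rw [slope_def_field, hgx, sub_zero] at hy1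
  have hyt : y - x₀ < 0 := sub_neg.mpr hy2.2
  have hmp := mul_pos hy1 (neg_pos.mpr hyt)
  rw [mul_neg, div_mul_cancel₀ _ hyt.ne] at hmp
  linarith

theorem stmt_5 (σ : ℝ) (hσ : 0 < σ) (U : Set ℝ) (hUne : U.Nonempty) (hUcpt : IsCompact U)
    (c : ℝ → ℝ) (hc : Continuous c) (h : ℝ → ℝ)
    (hhcont : ContinuousOn h (Set.Ici 0)) (hhmono : StrictMonoOn h (Set.Ici 0))
    (hh0 : h 0 = 0) (hhtop : Filter.Tendsto h Filter.atTop Filter.atTop)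
    (w₀ γ₁ γ₂ : ℝ) (hγ : γ₁ < γ₂) (w₁ w₁' w₂ w₂' : ℝ → ℝ)
    (hw₁ : IsSolution σ U c h w₀ γ₁ w₁ w₁')
    (hw₂ : IsSolution σ U c h w₀ γ₂ w₂ w₂') :
    ∀ x : ℝ, 0 < x → w₁ x < w₂ x := by
  obtain ⟨hw₁0, _, hw₁der, hw₁eq⟩ := hw₁
  obtain ⟨hw₂0, _, hw₂der, hw₂eq⟩ := hw₂
  set g : ℝ → ℝ := fun x => w₂ x - w₁ x with hg
  have hσ2 : (0:ℝ) < σ ^ 2 / 2 := by positivity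
  -- key: at equality points the derivative gap is positive
  have hkey : ∀ x ∈ Set.Ici (0:ℝ), w₁ x = w₂ x → 0 < w₂' x - w₁' x := by
    intro x hx hxeq
    have e₁ := hw₁eq x hx
    have e₂ := hw₂eq x hx
    rw [hxeq] at e₁
    have hmul : σ ^ 2 / 2 * (w₂' x - w₁' x) = γ₂ - γ₁ := by ring_nf; linarith
    nlinarith [mul_pos hσ2 (sub_pos.mpr hγ)]
  have hgder : ∀ x ∈ Set.Ici (0:ℝ), HasDerivWithinAt g (w₂' x - w₁' x) (Set.Ici 0) x :=
    fun x hx => (hw₂der x hx).sub (hw₁der x hx)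
  have hgcont : ContinuousOn g (Set.Ici 0) :=
    fun x hx => ((hw₂der x hx).continuousWithinAt.sub (hw₁der x hx).continuousWithinAt)
  have hg0 : g 0 = 0 := by simp [hg, hw₂0, hw₁0]
  intro x hx
  by_contra hcon
  push_neg at hcon
  have hgx : g x ≤ 0 := sub_nonpos.mpr hcon
  -- produce a point b ∈ (0, x] with g b < 0
  obtain ⟨b, hb0, hbx, hgb⟩ : ∃ b, 0 < b ∧ b ≤ x ∧ g b < 0 := by
    rcases lt_or_eq_of_le hgx with hlt | heq
    · exact ⟨x, hx, le_refl x, hlt⟩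
    · have heq' : w₂ x - w₁ x = 0 := heq
      have hxeq : w₁ x = w₂ x := by linarith
      obtain ⟨y, hy0, hyx, hgy⟩ :=
        aux_left_neg (hkey x hx.le hxeq) hx (hgder x hx.le) heq
      exact ⟨y, hy0, hyx.le, hgy⟩
  -- last zero of g before b
  set S : Set ℝ := Set.Icc 0 b ∩ g ⁻¹' {0} with hS
  have hSclosed : IsClosed S :=
    (hgcont.mono (fun z hz => hz.1)).preimage_isClosed_of_isClosed isClosed_Icc isClosed_singleton
  have hScpt : IsCompact S := isCompact_Icc.of_isClosed_subset hSclosed Set.inter_subset_left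
  have h0S : (0:ℝ) ∈ S := ⟨⟨le_refl 0, hb0.le⟩, by simp [hg0]⟩
  set t : ℝ := sSup S with htdef
  have htS : t ∈ S := hScpt.sSup_mem ⟨0, h0S⟩
  have ht0 : 0 ≤ t := htS.1.1
  have hgt : g t = 0 := htS.2
  have htb : t < b := lt_of_le_of_ne htS.1.2 (fun hteq => by rw [hteq] at hgt; exact hgb.ne hgt)
  -- g is positive just right of t
  have hteq : w₁ t = w₂ t := by
    have h' : w₂ t - w₁ t = 0 := hgt
    linarith
  obtain ⟨y, hty, hyb, hgy⟩ :=
    aux_right_pos (hkey t ht0 hteq) ht0 htb (hgder t ht0) hgt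
  -- IVT between y and b gives a zero of g in (t, b], contradicting maximality of t
  have hycont : ContinuousOn g (Set.Icc y b) :=
    hgcont.mono (fun z hz => le_trans (ht0.trans hty.le) hz.1)
  have hmem : (0:ℝ) ∈ Set.Icc (g b) (g y) := ⟨hgb.le, hgy.le⟩
  obtain ⟨z, hz, hgz⟩ := intermediate_value_Icc' hyb.le hycont hmem
  have hzS : z ∈ S := ⟨⟨le_trans (ht0.trans hty.le) hz.1, hz.2⟩, hgz⟩
  have : z ≤ t := le_csSup hScpt.bddAbove hzS
  linarith [lt_of_lt_of_le hty hz.1]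
end

section
/- Fix x > 0 and w₀ ∈ ℝ. Then solutions diverge at x as γ → ±∞: for every C ∈ ℝ there exists Γ ∈ ℝ such that for all γ ≥ Γ, every solution w with parameters (w₀,γ) satisfies w(x) > C; and for every C ∈ ℝ there exists Γ′ ∈ ℝ such that for all γ ≤ Γ′, every solution w with parameters (w₀,γ) satisfies w(x) < C. -/
open Set MeasureTheory Filter Topology

/-!
For `y ∈ [0, x]` the equation gives `(σ²/2)·w′(y) = γ − π(w(y)) − h(y)`. Along a line
`ℓ(y) = w₀ + K·y` the continuous function `π(ℓ(y)) + h(y)` is bounded on `[0, x]`, so once `γ`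
is large (resp. small) enough, `w` crosses `ℓ` only with slope `> K` (resp. `< K`). The fencing
theorem then keeps `w` above (resp. below) `ℓ` on `[0, x]`, and `K` is chosen so that `ℓ(x)`
lies beyond `C`.
-/

theorem continuous_piU {U : Set ℝ} (hU : IsCompact U) {c : ℝ → ℝ} (hc : Continuous c) :
    Continuous (piU U c) :=
  hU.continuous_sInf (f := fun w μ => μ * w + c μ) (by fun_prop)

namespace IsSolution

variable {σ : ℝ} {U : Set ℝ} {c h : ℝ → ℝ} {w₀ γ : ℝ} {w w' : ℝ → ℝ}

theorem hasDerivWithinAt_Ici (hw : IsSolution σ U c h w₀ γ w w') {y : ℝ} (hy : 0 ≤ y) :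
    HasDerivWithinAt w (w' y) (Ici y) y :=
  (hw.2.2.1 y hy).mono (Ici_subset_Ici.mpr hy)

theorem continuousOn_Icc (hw : IsSolution σ U c h w₀ γ w w') (x : ℝ) :
    ContinuousOn w (Icc 0 x) := fun y hy =>
  (hw.2.2.1 y hy.1).continuousWithinAt.mono Icc_subset_Ici_self

theorem add_mul_le_apply (hw : IsSolution σ U c h w₀ γ w w') (hσ : σ ≠ 0) {x K : ℝ} (hx : 0 ≤ x)
    (hslope : ∀ y ∈ Ico 0 x, σ ^ 2 / 2 * K + piU U c (w₀ + K * y) + h y < γ) :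
    w₀ + K * x ≤ w x := by
  have hσ2 : 0 < σ ^ 2 / 2 := by positivity
  refine image_le_of_deriv_right_lt_deriv_boundary' (f' := fun _ => K)
    (by fun_prop) (fun _ _ => ((hasDerivAt_const_mul K).const_add w₀).hasDerivWithinAt)
    (by simp [hw.1]) (hw.continuousOn_Icc x) (fun y hy => hw.hasDerivWithinAt_Ici hy.1)
    (fun y hy hcontact => ?_) ⟨hx, le_rfl⟩
  have hode := hw.2.2.2 y hy.1
  rw [← hcontact] at hode
  nlinarith [hslope y hy]

theorem apply_le_add_mul (hw : IsSolution σ U c h w₀ γ w w') (hσ : σ ≠ 0) {x K : ℝ} (hx : 0 ≤ x)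
    (hslope : ∀ y ∈ Ico 0 x, γ < σ ^ 2 / 2 * K + piU U c (w₀ + K * y) + h y) :
    w x ≤ w₀ + K * x := by
  have hσ2 : 0 < σ ^ 2 / 2 := by positivity
  refine image_le_of_deriv_right_lt_deriv_boundary' (B' := fun _ => K)
    (hw.continuousOn_Icc x) (fun y hy => hw.hasDerivWithinAt_Ici hy.1) (by simp [hw.1])
    (by fun_prop) (fun _ _ => ((hasDerivAt_const_mul K).const_add w₀).hasDerivWithinAt)
    (fun y hy hcontact => ?_) ⟨hx, le_rfl⟩
  have hode := hw.2.2.2 y hy.1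
  rw [hcontact] at hode
  nlinarith [hslope y hy]

end IsSolution

theorem stmt_6_general (σ : ℝ) (hσ : 0 < σ) (U : Set ℝ) (hUcpt : IsCompact U)
    (c : ℝ → ℝ) (hc : Continuous c) (h : ℝ → ℝ)
    (hhcont : ContinuousOn h (Set.Ici 0))
    (w₀ x : ℝ) (hx : 0 < x) :
    (∀ C : ℝ, ∃ Γ : ℝ, ∀ γ : ℝ, Γ ≤ γ → ∀ w w' : ℝ → ℝ,
      IsSolution σ U c h w₀ γ w w' → C < w x) ∧
    (∀ C : ℝ, ∃ Γ' : ℝ, ∀ γ : ℝ, γ ≤ Γ' → ∀ w w' : ℝ → ℝ,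
      IsSolution σ U c h w₀ γ w w' → w x < C) := by
  have hcont (K : ℝ) : ContinuousOn (fun y => piU U c (w₀ + K * y) + h y) (Icc 0 x) :=
    ((continuous_piU hUcpt hc).comp_continuousOn (by fun_prop)).add
      (hhcont.mono Icc_subset_Ici_self)
  have hKx (K : ℝ) : K / x * x = K := div_mul_cancel₀ K hx.ne'
  constructor
  · intro C
    set K := (|C - w₀| + 1) / x
    obtain ⟨M, hM⟩ := isCompact_Icc.bddAbove_image (hcont K)
    refine ⟨σ ^ 2 / 2 * K + M + 1, fun γ hγ w w' hw => ?_⟩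
    have hline := hw.add_mul_le_apply hσ.ne' hx.le (K := K) fun y hy =>
      by linarith [hM ⟨y, Ico_subset_Icc_self hy, rfl⟩]
    linarith [hKx (|C - w₀| + 1), le_abs_self (C - w₀)]
  · intro C
    set K := -(|C - w₀| + 1) / x
    obtain ⟨M, hM⟩ := isCompact_Icc.bddBelow_image (hcont K)
    refine ⟨σ ^ 2 / 2 * K + M - 1, fun γ hγ w w' hw => ?_⟩
    have hline := hw.apply_le_add_mul hσ.ne' hx.le (K := K) fun y hy =>
      by linarith [hM ⟨y, Ico_subset_Icc_self hy, rfl⟩]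
    linarith [hKx (-(|C - w₀| + 1)), neg_abs_le (C - w₀)]

theorem stmt_6 (σ : ℝ) (hσ : 0 < σ) (U : Set ℝ) (hUne : U.Nonempty) (hUcpt : IsCompact U)
    (c : ℝ → ℝ) (hc : Continuous c) (h : ℝ → ℝ)
    (hhcont : ContinuousOn h (Set.Ici 0)) (hhmono : StrictMonoOn h (Set.Ici 0))
    (hh0 : h 0 = 0) (hhtop : Filter.Tendsto h Filter.atTop Filter.atTop)
    (w₀ x : ℝ) (hx : 0 < x) :
    (∀ C : ℝ, ∃ Γ : ℝ, ∀ γ : ℝ, Γ ≤ γ → ∀ w w' : ℝ → ℝ,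
      IsSolution σ U c h w₀ γ w w' → C < w x) ∧
    (∀ C : ℝ, ∃ Γ' : ℝ, ∀ γ : ℝ, γ ≤ Γ' → ∀ w w' : ℝ → ℝ,
      IsSolution σ U c h w₀ γ w w' → w x < C) :=
  stmt_6_general σ hσ U hUcpt c hc h hhcont w₀ x hx
end

section
/- Fix x ≥ 0 and γ ∈ ℝ. Then solutions diverge at x as w₀ → ±∞: for every C ∈ ℝ there exists W ∈ ℝ such that for all w₀ ≥ W, every solution w with parameters (w₀,γ) satisfies w(x) > C; and for every C ∈ ℝ there exists W′ ∈ ℝ such that for all w₀ ≤ W′, every solution w with parameters (w₀,γ) satisfies w(x) < C. -/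
open Set MeasureTheory Filter Topology

/-!
Since `U` is compact and `c` continuous, `|π(v)| ≤ r |v| + M`, so along a solution the
equation gives `|w'| ≤ K |w| + ε` on `[0, x]`. Grönwall's inequality, run backwards in time,
then bounds `|w(0)|` by `gronwallBound |C| K ε x` as soon as `w` takes the value `±|C|`
somewhere in `[0, x]`. If `w₀` exceeds that bound and `w(x) ≤ C`, the intermediate value
theorem provides such a point, a contradiction; the case `w₀ → -∞` is the same for `-w`.
-/

theorem norm_le_gronwallBound_of_norm_deriv_left_le {E : Type*} [NormedAddCommGroup E]
    [NormedSpace ℝ E] {f f' : ℝ → E} {δ K ε a b : ℝ}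
    (hf : ContinuousOn f (Icc a b)) (hf' : ∀ x ∈ Ioc a b, HasDerivAt f (f' x) x)
    (hb : ‖f b‖ ≤ δ) (bound : ∀ x ∈ Ioc a b, ‖f' x‖ ≤ K * ‖f x‖ + ε) :
    ∀ x ∈ Icc a b, ‖f x‖ ≤ gronwallBound δ K ε (b - x) := by
  intro x hx
  have hmaps : MapsTo (fun s => b - s) (Icc 0 (b - a)) (Icc a b) :=
    fun s hs => ⟨by linarith [hs.2], by linarith [hs.1]⟩
  have hmaps' : MapsTo (fun s => b - s) (Ico 0 (b - a)) (Ioc a b) :=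
    fun s hs => ⟨by linarith [hs.2], by linarith [hs.1]⟩
  simpa using norm_le_gronwallBound_of_norm_deriv_right_le (f := fun s => f (b - s))
    (f' := fun s => -f' (b - s)) (a := 0) (b := b - a)
    (hf.comp (continuous_const.sub continuous_id).continuousOn hmaps)
    (fun s hs => ((hf' _ (hmaps' hs)).comp_const_sub b s).hasDerivWithinAt)
    (by simpa using hb) (fun s hs => by simpa using bound _ (hmaps' hs))
    (b - x) ⟨by linarith [hx.2], by linarith [hx.1]⟩

theorem lt_of_gronwallBound_lt {f f' : ℝ → ℝ} {K ε a b C : ℝ} (hab : a ≤ b) (hK : 0 ≤ K)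
    (hε : 0 ≤ ε) (hf : ContinuousOn f (Icc a b)) (hf' : ∀ x ∈ Ioc a b, HasDerivAt f (f' x) x)
    (bound : ∀ x ∈ Ioc a b, |f' x| ≤ K * |f x| + ε)
    (ha : gronwallBound |C| K ε (b - a) < f a) : C < f b := by
  by_contra! hfb
  have hmono := gronwallBound_mono (abs_nonneg C) hε hK
  have hCa : |C| < f a := by
    calc |C| = gronwallBound |C| K ε 0 := (gronwallBound_x0 _ _ _).symm
      _ ≤ gronwallBound |C| K ε (b - a) := hmono (sub_nonneg.2 hab)
      _ < f a := ha
  obtain ⟨t, ht, hft⟩ := intermediate_value_Icc' hab hf ⟨hfb.trans (le_abs_self C), hCa.le⟩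
  have hback := norm_le_gronwallBound_of_norm_deriv_left_le (f' := f') (δ := |C|) (K := K)
    (ε := ε) (hf.mono (Icc_subset_Icc_right ht.2))
    (fun s hs => hf' s ⟨hs.1, hs.2.trans ht.2⟩) (by simp [hft])
    (fun s hs => bound s ⟨hs.1, hs.2.trans ht.2⟩) a (left_mem_Icc.2 ht.1)
  rw [Real.norm_eq_abs] at hback
  linarith [le_abs_self (f a), hmono (show t - a ≤ b - a by linarith [ht.2])]

theorem lt_of_lt_neg_gronwallBound {f f' : ℝ → ℝ} {K ε a b C : ℝ} (hab : a ≤ b) (hK : 0 ≤ K)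
    (hε : 0 ≤ ε) (hf : ContinuousOn f (Icc a b)) (hf' : ∀ x ∈ Ioc a b, HasDerivAt f (f' x) x)
    (bound : ∀ x ∈ Ioc a b, |f' x| ≤ K * |f x| + ε)
    (ha : f a < -gronwallBound |C| K ε (b - a)) : f b < C := by
  have := lt_of_gronwallBound_lt (f := fun t => -f t) (f' := fun t => -f' t) (C := -C) hab hK hε
    hf.neg (fun x hx => (hf' x hx).neg) (fun x hx => by simpa only [abs_neg] using bound x hx)
    (by rw [abs_neg]; linarith)
  linarith

theorem abs_piU_le {U : Set ℝ} {c : ℝ → ℝ} {r M : ℝ} (hU : U.Nonempty)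
    (hr : ∀ μ ∈ U, |μ| ≤ r) (hM : ∀ μ ∈ U, |c μ| ≤ M) (v : ℝ) :
    |piU U c v| ≤ r * |v| + M := by
  have hbound : ∀ y ∈ (fun μ => μ * v + c μ) '' U, |y| ≤ r * |v| + M := by
    rintro _ ⟨μ, hμ, rfl⟩
    calc |μ * v + c μ| ≤ |μ| * |v| + |c μ| := by rw [← abs_mul]; exact abs_add_le _ _
      _ ≤ r * |v| + M := by gcongr <;> simp [hr μ hμ, hM μ hμ]
  obtain ⟨μ, hμ⟩ := hU
  have hmem : μ * v + c μ ∈ (fun μ => μ * v + c μ) '' U := mem_image_of_mem _ hμ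
  have hbdd : BddBelow ((fun μ => μ * v + c μ) '' U) :=
    ⟨-(r * |v| + M), fun y hy => (abs_le.1 (hbound y hy)).1⟩
  refine abs_le.2 ⟨le_csInf ⟨_, hmem⟩ fun y hy => (abs_le.1 (hbound y hy)).1, ?_⟩
  exact (csInf_le hbdd hmem).trans (abs_le.1 (hbound _ hmem)).2

namespace IsSolution

variable {σ : ℝ} {U : Set ℝ} {c h : ℝ → ℝ} {w₀ γ : ℝ} {w w' : ℝ → ℝ}

theorem continuousOn (hw : IsSolution σ U c h w₀ γ w w') : ContinuousOn w (Ici 0) :=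
  fun t ht => (hw.2.2.1 t ht).continuousWithinAt

theorem hasDerivAt (hw : IsSolution σ U c h w₀ γ w w') {t : ℝ} (ht : 0 < t) :
    HasDerivAt w (w' t) t :=
  (hw.2.2.1 t ht.le).hasDerivAt (Ici_mem_nhds ht)

theorem abs_deriv_le (hw : IsSolution σ U c h w₀ γ w w') (hσ : σ ≠ 0) (hU : U.Nonempty)
    {r M H : ℝ} (hr : ∀ μ ∈ U, |μ| ≤ r) (hM : ∀ μ ∈ U, |c μ| ≤ M) {t : ℝ} (ht : 0 ≤ t)
    (hH : |h t| ≤ H) :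
    |w' t| ≤ 2 * r / σ ^ 2 * |w t| + 2 * (|γ| + M + H) / σ ^ 2 := by
  have hσ2 : 0 < σ ^ 2 := by positivity
  have hw' : w' t = (γ - piU U c (w t) - h t) * (2 / σ ^ 2) := by
    field_simp
    linarith [hw.2.2.2 t ht]
  have hπ := abs_le.1 (abs_piU_le hU hr hM (w t))
  have hsum : |γ - piU U c (w t) - h t| ≤ r * |w t| + (|γ| + M + H) := by
    rw [abs_le] at hH ⊢
    constructor <;> linarith [neg_abs_le γ, le_abs_self γ]
  calc |w' t| = |γ - piU U c (w t) - h t| * (2 / σ ^ 2) := by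
        rw [hw', abs_mul, abs_of_pos (show (0:ℝ) < 2 / σ ^ 2 by positivity)]
    _ ≤ (r * |w t| + (|γ| + M + H)) * (2 / σ ^ 2) := by gcongr
    _ = 2 * r / σ ^ 2 * |w t| + 2 * (|γ| + M + H) / σ ^ 2 := by ring

end IsSolution

theorem stmt_8_general (σ : ℝ) (hσ : 0 < σ) (U : Set ℝ) (hUne : U.Nonempty) (hUcpt : IsCompact U)
    (c : ℝ → ℝ) (hc : Continuous c) (h : ℝ → ℝ)
    (hhcont : ContinuousOn h (Set.Ici 0))
    (γ x : ℝ) (hx : 0 ≤ x) :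
    (∀ C : ℝ, ∃ W : ℝ, ∀ w₀ : ℝ, W ≤ w₀ → ∀ w w' : ℝ → ℝ,
      IsSolution σ U c h w₀ γ w w' → C < w x) ∧
    (∀ C : ℝ, ∃ W' : ℝ, ∀ w₀ : ℝ, w₀ ≤ W' → ∀ w w' : ℝ → ℝ,
      IsSolution σ U c h w₀ γ w w' → w x < C) := by
  obtain ⟨r, hr⟩ := hUcpt.exists_bound_of_continuousOn continuous_id.continuousOn
  obtain ⟨M, hM⟩ := hUcpt.exists_bound_of_continuousOn hc.continuousOn
  obtain ⟨H, hH⟩ := isCompact_Icc.exists_bound_of_continuousOn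
    (hhcont.mono (Icc_subset_Ici_self : Icc 0 x ⊆ Ici 0))
  simp only [id, Real.norm_eq_abs] at hr hM hH
  obtain ⟨μ, hμ⟩ := hUne
  set K := 2 * r / σ ^ 2
  set ε := 2 * (|γ| + M + H) / σ ^ 2
  have hK : 0 ≤ K := by have := (abs_nonneg μ).trans (hr μ hμ); positivity
  have hε : 0 ≤ ε := by
    have := (abs_nonneg (c μ)).trans (hM μ hμ)
    have := (abs_nonneg (h 0)).trans (hH 0 (left_mem_Icc.2 hx))
    positivity
  have hsol {w₀ : ℝ} {w w' : ℝ → ℝ} (hw : IsSolution σ U c h w₀ γ w w') :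
      ContinuousOn w (Icc 0 x) ∧ (∀ t ∈ Ioc 0 x, HasDerivAt w (w' t) t) ∧
        ∀ t ∈ Ioc 0 x, |w' t| ≤ K * |w t| + ε :=
    ⟨hw.continuousOn.mono Icc_subset_Ici_self, fun t ht => hw.hasDerivAt ht.1, fun t ht =>
      hw.abs_deriv_le hσ.ne' ⟨μ, hμ⟩ hr hM ht.1.le (hH t (Ioc_subset_Icc_self ht))⟩
  refine ⟨fun C => ⟨gronwallBound |C| K ε x + 1, fun w₀ hW w w' hw => ?_⟩,
    fun C => ⟨-gronwallBound |C| K ε x - 1, fun w₀ hW w w' hw => ?_⟩⟩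
  · obtain ⟨hcont, hderiv, hbound⟩ := hsol hw
    exact lt_of_gronwallBound_lt hx hK hε hcont hderiv hbound (by rw [sub_zero, hw.1]; linarith)
  · obtain ⟨hcont, hderiv, hbound⟩ := hsol hw
    exact lt_of_lt_neg_gronwallBound hx hK hε hcont hderiv hbound (by rw [sub_zero, hw.1]; linarith)

theorem stmt_8 (σ : ℝ) (hσ : 0 < σ) (U : Set ℝ) (hUne : U.Nonempty) (hUcpt : IsCompact U)
    (c : ℝ → ℝ) (hc : Continuous c) (h : ℝ → ℝ)
    (hhcont : ContinuousOn h (Set.Ici 0)) (hhmono : StrictMonoOn h (Set.Ici 0))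
    (hh0 : h 0 = 0) (hhtop : Filter.Tendsto h Filter.atTop Filter.atTop)
    (γ x : ℝ) (hx : 0 ≤ x) :
    (∀ C : ℝ, ∃ W : ℝ, ∀ w₀ : ℝ, W ≤ w₀ → ∀ w w' : ℝ → ℝ,
      IsSolution σ U c h w₀ γ w w' → C < w x) ∧
    (∀ C : ℝ, ∃ W' : ℝ, ∀ w₀ : ℝ, w₀ ≤ W' → ∀ w w' : ℝ → ℝ,
      IsSolution σ U c h w₀ γ w w' → w x < C) :=
  stmt_8_general σ hσ U hUne hUcpt c hc h hhcont γ x hx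
end

section
/- Let k > 0, K > 0, ℓ > 0, L > 0, and suppose 0 < q < Q < S, γ ∈ ℝ, and w : [0,∞) → ℝ is continuously differentiable with (σ²/2)·w′(x) + π(w(x)) + h(x) = γ for all x ≥ 0, w(q) = −k, w(Q) = w(S) = ℓ, ∫₀^q (w(x)+k) dx = −K, and ∫_Q^S (w(x)−ℓ) dx = L. Then there exists x★ ∈ (Q, S) such that w is strictly increasing on [0, x★] and strictly decreasing on [x★, ∞); consequently, with μ̂(v) := min{μ ∈ 𝒰 : μ·v + c(μ) = π(v)} (the smallest minimizer), the map x ↦ μ̂(w(x)) is nonincreasing on [0, x★] and nondecreasing on [x★, ∞). -/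
open Set MeasureTheory Filter Topology

/-- The smallest minimizer of the map mu -> mu*v + c(mu) over U. -/
noncomputable def muHat (U : Set ℝ) (c : ℝ → ℝ) (v : ℝ) : ℝ :=
  sInf {μ : ℝ | μ ∈ U ∧ μ * v + c μ = piU U c v}

variable {U : Set ℝ} {c : ℝ → ℝ}

lemma contAux (hc : Continuous c) (v : ℝ) : Continuous fun μ => μ * v + c μ :=
  (continuous_id.mul continuous_const).add hc

lemma piU_le (hUcpt : IsCompact U) (hc : Continuous c) {μ : ℝ} (hμ : μ ∈ U) (v : ℝ) :
    piU U c v ≤ μ * v + c μ :=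
  csInf_le (hUcpt.image (contAux hc v)).bddBelow (Set.mem_image_of_mem _ hμ)

lemma exists_min (hUne : U.Nonempty) (hUcpt : IsCompact U) (hc : Continuous c) (v : ℝ) :
    ∃ μ ∈ U, μ * v + c μ = piU U c v := by
  obtain ⟨μ0, hμ0, hmin⟩ := hUcpt.exists_isMinOn hUne (contAux hc v).continuousOn
  refine ⟨μ0, hμ0, le_antisymm ?_ (piU_le hUcpt hc hμ0 v)⟩
  refine le_csInf (hUne.image _) ?_
  rintro b ⟨μ, hμ, rfl⟩
  exact hmin hμ

lemma muHat_spec (hUne : U.Nonempty) (hUcpt : IsCompact U) (hc : Continuous c) (v : ℝ) :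
    muHat U c v ∈ U ∧ muHat U c v * v + c (muHat U c v) = piU U c v := by
  have hset : {μ : ℝ | μ ∈ U ∧ μ * v + c μ = piU U c v}
      = U ∩ (fun μ => μ * v + c μ) ⁻¹' {piU U c v} := by
    ext μ; simp [Set.mem_preimage]
  have hclosed : IsClosed {μ : ℝ | μ ∈ U ∧ μ * v + c μ = piU U c v} := by
    rw [hset]
    exact hUcpt.isClosed.inter (isClosed_singleton.preimage (contAux hc v))
  have hne : {μ : ℝ | μ ∈ U ∧ μ * v + c μ = piU U c v}.Nonempty := by
    obtain ⟨μ, hμ, hmin⟩ := exists_min hUne hUcpt hc v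
    exact ⟨μ, hμ, hmin⟩
  have hbdd : BddBelow {μ : ℝ | μ ∈ U ∧ μ * v + c μ = piU U c v} :=
    hUcpt.bddBelow.mono fun μ hμ => hμ.1
  exact hclosed.csInf_mem hne hbdd

lemma muHat_antitone (hUne : U.Nonempty) (hUcpt : IsCompact U) (hc : Continuous c) :
    Antitone (muHat U c) := by
  intro v₁ v₂ hle
  rcases eq_or_lt_of_le hle with rfl | hlt
  · exact le_rfl
  obtain ⟨h1U, h1⟩ := muHat_spec hUne hUcpt hc v₁
  obtain ⟨h2U, h2⟩ := muHat_spec hUne hUcpt hc v₂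
  set μ1 := muHat U c v₁
  set μ2 := muHat U c v₂
  have e1 : μ1 * v₁ + c μ1 ≤ μ2 * v₁ + c μ2 := h1 ▸ piU_le hUcpt hc h2U v₁
  have e2 : μ2 * v₂ + c μ2 ≤ μ1 * v₂ + c μ1 := h2 ▸ piU_le hUcpt hc h1U v₂
  nlinarith [hlt]

lemma piU_lip (hUne : U.Nonempty) (hUcpt : IsCompact U) (hc : Continuous c) {M : ℝ}
    (hM : ∀ μ ∈ U, |μ| ≤ M) (v₁ v₂ : ℝ) :
    piU U c v₁ - piU U c v₂ ≤ M * |v₁ - v₂| := by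
  obtain ⟨μ2, hμ2U, hμ2⟩ := exists_min hUne hUcpt hc v₂
  have h1 : piU U c v₁ ≤ μ2 * v₁ + c μ2 := piU_le hUcpt hc hμ2U v₁
  have h2 : μ2 * v₁ - μ2 * v₂ ≤ M * |v₁ - v₂| := by
    calc μ2 * v₁ - μ2 * v₂ = μ2 * (v₁ - v₂) := by ring
    _ ≤ |μ2 * (v₁ - v₂)| := le_abs_self _
    _ = |μ2| * |v₁ - v₂| := abs_mul _ _
    _ ≤ M * |v₁ - v₂| := by
        have := hM μ2 hμ2U
        have := abs_nonneg (v₁ - v₂)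
        nlinarith
  linarith

set_option maxHeartbeats 1000000 in
theorem stmt_17 (σ : ℝ) (hσ : 0 < σ) (U : Set ℝ) (hUne : U.Nonempty) (hUcpt : IsCompact U)
    (c : ℝ → ℝ) (hc : Continuous c) (h : ℝ → ℝ)
    (hhcont : ContinuousOn h (Set.Ici 0)) (hhmono : StrictMonoOn h (Set.Ici 0))
    (hh0 : h 0 = 0) (hhtop : Filter.Tendsto h Filter.atTop Filter.atTop)
    (k K ℓ L q Q S γ : ℝ) (hk : 0 < k) (hK : 0 < K) (hℓ : 0 < ℓ) (hL : 0 < L)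
    (hq : 0 < q) (hqQ : q < Q) (hQS : Q < S) (w w' : ℝ → ℝ)
    (hw'cont : ContinuousOn w' (Set.Ici 0))
    (hderiv : ∀ x ∈ Set.Ici (0:ℝ), HasDerivWithinAt w (w' x) (Set.Ici 0) x)
    (hode : ∀ x ∈ Set.Ici (0:ℝ), σ ^ 2 / 2 * w' x + piU U c (w x) + h x = γ)
    (hwq : w q = -k) (hwQ : w Q = ℓ) (hwS : w S = ℓ)
    (hIK : (∫ x in (0:ℝ)..q, (w x + k)) = -K)
    (hIL : (∫ x in Q..S, (w x - ℓ)) = L) :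
    ∃ xs : ℝ, xs ∈ Set.Ioo Q S ∧
      StrictMonoOn w (Set.Icc 0 xs) ∧ StrictAntiOn w (Set.Ici xs) ∧
      AntitoneOn (fun x => muHat U c (w x)) (Set.Icc 0 xs) ∧
      MonotoneOn (fun x => muHat U c (w x)) (Set.Ici xs) := by
  have hwcont : ContinuousOn w (Set.Ici 0) := fun x hx => (hderiv x hx).continuousWithinAt
  have hmono_h : MonotoneOn h (Set.Ici 0) := hhmono.monotoneOn
  obtain ⟨M, hMbd⟩ : ∃ M : ℝ, ∀ μ ∈ U, |μ| ≤ M := by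
    obtain ⟨M, hM⟩ := hUcpt.isBounded.subset_closedBall 0
    exact ⟨M, fun μ hμ => by simpa [Real.dist_eq] using hM hμ⟩
  have hM0 : 0 ≤ M := le_trans (abs_nonneg _) (hMbd hUne.some hUne.some_mem)
  have hLip : ∀ v₁ v₂ : ℝ, piU U c v₁ - piU U c v₂ ≤ M * |v₁ - v₂| :=
    piU_lip hUne hUcpt hc hMbd
  have hLipAbs : ∀ v₁ v₂ : ℝ, |piU U c v₁ - piU U c v₂| ≤ M * |v₁ - v₂| := by
    intro v₁ v₂
    rw [abs_sub_le_iff]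
    exact ⟨hLip v₁ v₂, by rw [abs_sub_comm]; exact hLip v₂ v₁⟩
  set δ : ℝ := σ ^ 2 / (8 * (M + 1)) with hδdef
  have hδpos : 0 < δ := by positivity
  have hMδ : M * δ ≤ σ ^ 2 / 8 := by
    rw [hδdef, mul_div_assoc']
    rw [div_le_div_iff₀ (by positivity) (by norm_num)]
    nlinarith [sq_nonneg σ]
  -- Lemma B : after a zero of w', the derivative is negative for a short while
  have lemB : ∀ b, 0 ≤ b → w' b = 0 → ∀ x, b < x → x ≤ b + δ → w' x < 0 := by
    intro b hb hwb x hbx hxδ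
    have hx0 : (0:ℝ) ≤ x := le_trans hb hbx.le
    have hsub : Set.Icc b x ⊆ Set.Ici 0 := fun y hy => le_trans hb hy.1
    have hodeb := hode b hb
    rw [hwb, mul_zero, zero_add] at hodeb
    obtain ⟨x0, hx0mem, hx0max⟩ := isCompact_Icc.exists_isMaxOn
      (Set.nonempty_Icc.mpr hbx.le) ((hw'cont.mono hsub).abs)
    set m := |w' x0| with hm
    have hmax : ∀ y ∈ Set.Icc b x, |w' y| ≤ m := hx0max
    have hm0 : 0 ≤ m := abs_nonneg _
    have hMVT : ∀ y ∈ Set.Icc b x, |w y - w b| ≤ m * (y - b) := by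
      intro y hy
      have hmvt := Convex.norm_image_sub_le_of_norm_hasDerivWithin_le
        (f := w) (f' := w') (s := Set.Icc b x)
        (fun p hp => (hderiv p (hsub hp)).mono hsub)
        (fun p hp => by rw [Real.norm_eq_abs]; exact hmax p hp)
        (convex_Icc b x) (Set.left_mem_Icc.mpr hbx.le) hy
      rw [Real.norm_eq_abs, Real.norm_eq_abs, abs_of_nonneg (sub_nonneg.mpr hy.1)] at hmvt
      exact hmvt
    have hD : 0 < h x - h b := sub_pos.mpr (hhmono hb hx0 hbx)
    -- bound m
    have hodex0 := hode x0 (hsub hx0mem)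
    have hhx0 : |h b - h x0| ≤ h x - h b := by
      rw [abs_sub_comm, abs_of_nonneg (sub_nonneg.mpr (hmono_h hb (hsub hx0mem) hx0mem.1))]
      have := hmono_h (hsub hx0mem) hx0 hx0mem.2
      linarith
    have hwx0 : |w x0 - w b| ≤ m * δ := by
      have h1 := hMVT x0 hx0mem
      have h2 : x0 - b ≤ δ := by
        have := hx0mem.2; linarith
      have h3 := mul_le_mul_of_nonneg_left h2 hm0
      linarith
    have hPx0 : |piU U c (w b) - piU U c (w x0)| ≤ M * (m * δ) := by
      calc |piU U c (w b) - piU U c (w x0)| ≤ M * |w b - w x0| := hLipAbs _ _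
      _ ≤ M * (m * δ) := by rw [abs_sub_comm]; exact mul_le_mul_of_nonneg_left hwx0 hM0
    have hkey : σ ^ 2 / 2 * m ≤ (h x - h b) + M * (m * δ) := by
      have e : σ ^ 2 / 2 * w' x0 = (h b - h x0) + (piU U c (w b) - piU U c (w x0)) := by
        linarith
      have : |σ ^ 2 / 2 * w' x0| ≤ (h x - h b) + M * (m * δ) := by
        rw [e]
        calc |(h b - h x0) + (piU U c (w b) - piU U c (w x0))|
            ≤ |h b - h x0| + |piU U c (w b) - piU U c (w x0)| := abs_add_le _ _
        _ ≤ (h x - h b) + M * (m * δ) := add_le_add hhx0 hPx0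
      rwa [abs_mul, abs_of_pos (by positivity : (0:ℝ) < σ ^ 2 / 2)] at this
    have hMmδ : M * (m * δ) ≤ σ ^ 2 / 8 * m := by
      calc M * (m * δ) = M * δ * m := by ring
      _ ≤ σ ^ 2 / 8 * m := mul_le_mul_of_nonneg_right hMδ hm0
    have hmbound : σ ^ 2 * m ≤ 8 / 3 * (h x - h b) := by linarith
    -- final estimate at x
    have hodex := hode x hx0
    have hwx : |w x - w b| ≤ m * δ := by
      have h1 := hMVT x ⟨hbx.le, le_refl x⟩
      have h2 : x - b ≤ δ := by linarith
      have h3 := mul_le_mul_of_nonneg_left h2 hm0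
      linarith
    have hPx : piU U c (w b) - piU U c (w x) ≤ M * (m * δ) := by
      calc piU U c (w b) - piU U c (w x) ≤ M * |w b - w x| := le_trans (hLip _ _) (le_refl _)
      _ ≤ M * (m * δ) := by
          rw [abs_sub_comm]
          exact mul_le_mul_of_nonneg_left hwx hM0
    have e2 : σ ^ 2 / 2 * w' x = (h b - h x) + (piU U c (w b) - piU U c (w x)) := by
      linarith
    have hfin : σ ^ 2 / 2 * w' x < 0 := by
      have hb1 : σ ^ 2 / 8 * m ≤ (h x - h b) / 3 := by linarith
      have hb2 : piU U c (w b) - piU U c (w x) ≤ σ ^ 2 / 8 * m := le_trans hPx hMmδ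
      linarith
    by_contra hge
    push_neg at hge
    have : (0:ℝ) ≤ σ ^ 2 / 2 * w' x := mul_nonneg (by positivity) hge
    linarith
  -- derivative facts
  have hderivAt : ∀ x : ℝ, 0 < x → HasDerivAt w (w' x) x := fun x hx =>
    (hderiv x hx.le).hasDerivAt (Ici_mem_nhds hx)
  have hderiv_eq : ∀ x : ℝ, 0 < x → deriv w x = w' x := fun x hx => (hderivAt x hx).deriv
  -- Claim E : nonpositive derivative propagates forward
  have claimE : ∀ a, 0 ≤ a → w' a ≤ 0 → ∀ x, a < x → w' x ≤ 0 := by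
    intro a ha hwa x hax
    by_contra hpos
    push_neg at hpos
    set T := Set.Icc a x ∩ w' ⁻¹' Set.Iic 0 with hTdef
    have hsub : Set.Icc a x ⊆ Set.Ici 0 := fun y hy => le_trans ha hy.1
    have hTne : T.Nonempty := ⟨a, ⟨le_refl a, hax.le⟩, hwa⟩
    have hTbdd : BddAbove T := (bddAbove_Icc).mono (Set.inter_subset_left)
    have hTclosed : IsClosed T :=
      (hw'cont.mono hsub).preimage_isClosed_of_isClosed isClosed_Icc isClosed_Iic
    set r := sSup T with hrdef
    have hrT : r ∈ T := hTclosed.csSup_mem hTne hTbdd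
    have hra : a ≤ r := hrT.1.1
    have hwr : w' r ≤ 0 := hrT.2
    have hrltx : r < x := lt_of_le_of_ne hrT.1.2 (fun heq => by
      rw [heq] at hwr; linarith)
    have hr0 : (0:ℝ) ≤ r := le_trans ha hra
    have hposafter : ∀ t, r < t → t ≤ x → 0 < w' t := by
      intro t h1 h2
      by_contra hle
      push_neg at hle
      have htT : t ∈ T := ⟨⟨le_trans hra h1.le, h2⟩, hle⟩
      exact absurd (le_csSup hTbdd htT) (not_le.mpr h1)
    have htend : Filter.Tendsto w' (𝓝[>] r) (𝓝 (w' r)) :=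
      (hw'cont r hr0).mono (fun t ht => le_trans hr0 (le_of_lt ht))
    have hev : ∀ᶠ t in 𝓝[>] r, 0 ≤ w' t := by
      filter_upwards [Ioc_mem_nhdsGT_of_mem ⟨le_refl r, hrltx⟩] with t ht
      exact (hposafter t ht.1 ht.2).le
    have hwr0 : (0:ℝ) ≤ w' r := ge_of_tendsto htend hev
    have hwr' : w' r = 0 := le_antisymm hwr hwr0
    have hmin1 : r < min x (r + δ) := lt_min hrltx (by linarith)
    have ht := lemB r hr0 hwr' (min x (r + δ)) hmin1 (min_le_right _ _)
    exact absurd ht (not_lt.mpr (hposafter _ hmin1 (min_le_left _ _)).le)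
  -- Claim C : strict antitonicity after a nonpositive derivative
  have claimC : ∀ a, 0 ≤ a → w' a ≤ 0 → StrictAntiOn w (Set.Ici a) := by
    intro a ha hwa
    have hder_nonpos : ∀ t ∈ interior (Set.Ici a), deriv w t ≤ 0 := by
      intro t ht
      rw [interior_Ici] at ht
      have ht0 : 0 < t := lt_of_le_of_lt ha ht
      rw [hderiv_eq t ht0]
      exact claimE a ha hwa t ht
    have hdiff : DifferentiableOn ℝ w (interior (Set.Ici a)) := by
      intro t ht
      rw [interior_Ici] at ht
      exact (hderivAt t (lt_of_le_of_lt ha ht)).differentiableAt.differentiableWithinAt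
    have hanti : AntitoneOn w (Set.Ici a) :=
      antitoneOn_of_deriv_nonpos (convex_Ici a)
        (hwcont.mono (Set.Ici_subset_Ici.mpr ha)) hdiff hder_nonpos
    intro x hx y hy hxy
    rcases lt_or_eq_of_le (hanti hx hy hxy.le) with hlt | heq
    · exact hlt
    exfalso
    have hconst : ∀ p ∈ Set.Icc x y, w p = w x := by
      intro p hp
      have hpI : p ∈ Set.Ici a := le_trans hx hp.1
      have h1 := hanti hx hpI hp.1
      have h2 := hanti hpI hy hp.2
      linarith [heq]
    have hx0 : (0:ℝ) ≤ x := le_trans ha hx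
    have key : ∀ p ∈ Set.Ioo x y, piU U c (w x) + h p = γ := by
      intro p hp
      have hp0 : 0 < p := lt_of_le_of_lt hx0 hp.1
      have hev : w =ᶠ[𝓝 p] fun _ => w x := by
        filter_upwards [Ioo_mem_nhds hp.1 hp.2] with t ht
        exact hconst t (Set.Ioo_subset_Icc_self ht)
      have hdp : HasDerivAt w 0 p :=
        (hasDerivAt_const p (w x)).congr_of_eventuallyEq hev
      have hzero : w' p = 0 := ((hderivAt p hp0).unique hdp)
      have hodep := hode p hp0.le
      rw [hzero, mul_zero, zero_add, hconst p (Set.Ioo_subset_Icc_self hp)] at hodep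
      exact hodep
    have hxy3 : 0 < (y - x) / 3 := by linarith
    have hp1 : x + (y - x) / 3 ∈ Set.Ioo x y := ⟨by linarith, by linarith⟩
    have hp2 : x + (y - x) / 3 * 2 ∈ Set.Ioo x y := ⟨by linarith, by linarith⟩
    have e1 := key _ hp1
    have e2 := key _ hp2
    have hhe : h (x + (y - x) / 3) = h (x + (y - x) / 3 * 2) := by linarith
    have := hhmono (le_trans hx0 hp1.1.le : (0:ℝ) ≤ x + (y - x) / 3)
      (le_trans hx0 hp2.1.le : (0:ℝ) ≤ x + (y - x) / 3 * 2) (by linarith)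
    linarith
  -- there is a point above ℓ in (Q,S)
  have hQ0 : (0:ℝ) ≤ Q := by linarith
  have hQS_sub : Set.Icc Q S ⊆ Set.Ici 0 := fun y hy => le_trans hQ0 hy.1
  have hexz : ∃ z ∈ Set.Icc Q S, ℓ < w z := by
    by_contra hno
    push_neg at hno
    have hint : (0:ℝ) ≤ ∫ x in Q..S, (ℓ - w x) :=
      intervalIntegral.integral_nonneg hQS.le (fun u hu => by linarith [hno u hu])
    have heq : (∫ x in Q..S, (ℓ - w x)) = -L := by
      have : (∫ x in Q..S, (ℓ - w x)) = ∫ x in Q..S, -(w x - ℓ) := by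
        congr 1; ext x; ring
      rw [this, intervalIntegral.integral_neg, hIL]
    rw [heq] at hint
    linarith
  obtain ⟨z, hzmem, hz⟩ := hexz
  obtain ⟨xs, hxsmem, hxsmax⟩ := isCompact_Icc.exists_isMaxOn
    (Set.nonempty_Icc.mpr hQS.le) (hwcont.mono hQS_sub)
  have hmax' : ∀ y ∈ Set.Icc Q S, w y ≤ w xs := hxsmax
  have hwxs : ℓ < w xs := lt_of_lt_of_le hz (hmax' z hzmem)
  have hxsQ : Q < xs := lt_of_le_of_ne hxsmem.1 (fun e => by rw [← e, hwQ] at hwxs; linarith)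
  have hxsS : xs < S := lt_of_le_of_ne hxsmem.2 (fun e => by rw [e, hwS] at hwxs; linarith)
  have hxs0 : 0 < xs := lt_of_le_of_lt hQ0 hxsQ
  have hw'xs : w' xs = 0 := by
    have hnhds : Set.Icc Q S ∈ 𝓝 xs := Icc_mem_nhds hxsQ hxsS
    have hloc : IsLocalMax w xs := by
      filter_upwards [hnhds] with y hy
      exact hmax' y hy
    exact hloc.hasDerivAt_eq_zero (hderivAt xs hxs0)
  have hanti : StrictAntiOn w (Set.Ici xs) := claimC xs hxs0.le (le_of_eq hw'xs)
  have hpos : ∀ a, 0 ≤ a → a < xs → 0 < w' a := by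
    intro a ha haxs
    by_contra hle
    push_neg at hle
    have hAnti := claimC a ha hle
    rcases le_or_gt a Q with hcase | hcase
    · have := hAnti (Set.mem_Ici.mpr hcase) (Set.mem_Ici.mpr (le_trans hcase hQS.le)) hQS
      rw [hwQ, hwS] at this
      exact lt_irrefl _ this
    · have h1 := hAnti (Set.self_mem_Ici) (Set.mem_Ici.mpr haxs.le) haxs
      have h2 := hmax' a ⟨hcase.le, by linarith⟩
      linarith
  have hmonoI : StrictMonoOn w (Set.Icc 0 xs) := by
    apply strictMonoOn_of_deriv_pos (convex_Icc 0 xs) (hwcont.mono Set.Icc_subset_Ici_self)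
    intro t ht
    rw [interior_Icc] at ht
    rw [hderiv_eq t ht.1]
    exact hpos t ht.1.le ht.2
  have hmu : Antitone (muHat U c) := muHat_antitone hUne hUcpt hc
  refine ⟨xs, ⟨hxsQ, hxsS⟩, hmonoI, hanti, ?_, ?_⟩
  · intro x hx y hy hxy
    exact hmu (hmonoI.monotoneOn hx hy hxy)
  · intro x hx y hy hxy
    exact hmu (hanti.antitoneOn hx hy hxy)
end

section
/- Let k > 0, K > 0, ℓ > 0, let 0 < q < S, and let w : [0,S] → ℝ be continuous with w(x) ≤ −k for all x ∈ [0,q], w(x) ≥ −k for all x ∈ [q,S], and ∫₀^q (w(x)+k) dx = −K. Define f : [0,∞) → ℝ by f(x) = ∫₀^x w(y) dy for x ∈ [0,S] and f(x) = f(S) + ℓ·(x − S) for x > S. Then for all 0 ≤ x < y: f(x) ≤ f(y) + K + k·(y − x). -/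
open Set MeasureTheory Filter Topology

theorem stmt_18 (k K ℓ q S : ℝ) (hk : 0 < k) (hK : 0 < K) (hℓ : 0 < ℓ)
    (hq : 0 < q) (hqS : q < S) (w f : ℝ → ℝ)
    (hwcont : ContinuousOn w (Set.Icc 0 S))
    (hw₁ : ∀ x ∈ Set.Icc (0:ℝ) q, w x ≤ -k)
    (hw₂ : ∀ x ∈ Set.Icc q S, -k ≤ w x)
    (hint : (∫ x in (0:ℝ)..q, (w x + k)) = -K)
    (hf₁ : ∀ x ∈ Set.Icc (0:ℝ) S, f x = ∫ y in (0:ℝ)..x, w y)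
    (hf₂ : ∀ x : ℝ, S < x → f x = f S + ℓ * (x - S)) :
    ∀ x y : ℝ, 0 ≤ x → x < y → f x ≤ f y + K + k * (y - x) := by
  have hInt : ∀ a b : ℝ, 0 ≤ a → a ≤ b → b ≤ S → IntervalIntegrable w MeasureTheory.volume a b := by
    intro a b ha h hb
    exact (hwcont.mono (by rw [Set.uIcc_of_le h]; exact Set.Icc_subset_Icc ha hb)).intervalIntegrable
  -- f b - f a = ∫ a..b w for 0 ≤ a, b ≤ S
  have hdiff : ∀ a b : ℝ, 0 ≤ a → a ≤ b → b ≤ S →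
      f b = f a + ∫ y in a..b, w y := by
    intro a b ha hab hb
    rw [hf₁ a ⟨ha, le_trans hab hb⟩, hf₁ b ⟨le_trans ha hab, hb⟩]
    rw [intervalIntegral.integral_add_adjacent_intervals (hInt 0 a le_rfl ha (le_trans hab hb)) (hInt a b ha hab hb)]
  have key1 : ∀ a b : ℝ, 0 ≤ a → a ≤ b → b ≤ q → f b + k * b ≤ f a + k * a := by
    intro a b ha hab hb
    have hbS : b ≤ S := le_trans hb hqS.le
    have h1 : (∫ y in a..b, w y) ≤ ∫ _y in a..b, (-k : ℝ) := by
      apply intervalIntegral.integral_mono_on hab (hInt a b ha hab hbS) intervalIntegrable_const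
      intro x hx
      exact hw₁ x ⟨le_trans ha hx.1, le_trans hx.2 hb⟩
    rw [intervalIntegral.integral_const, smul_eq_mul] at h1
    have := hdiff a b ha hab hbS
    nlinarith
  have key2 : ∀ a b : ℝ, q ≤ a → a ≤ b → b ≤ S → f a + k * a ≤ f b + k * b := by
    intro a b ha hab hb
    have ha0 : (0:ℝ) ≤ a := le_trans hq.le ha
    have h1 : (∫ _y in a..b, (-k : ℝ)) ≤ ∫ y in a..b, w y := by
      apply intervalIntegral.integral_mono_on hab intervalIntegrable_const (hInt a b ha0 hab hb)
      intro x hx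
      exact hw₂ x ⟨le_trans ha hx.1, le_trans hx.2 hb⟩
    rw [intervalIntegral.integral_const, smul_eq_mul] at h1
    have := hdiff a b ha0 hab hb
    nlinarith
  have hf0 : f 0 = 0 := by
    rw [hf₁ 0 ⟨le_rfl, le_trans hq.le hqS.le⟩, intervalIntegral.integral_same]
  have hfq : f q + k * q = -K := by
    have hiw : IntervalIntegrable w MeasureTheory.volume 0 q := hInt 0 q le_rfl hq.le hqS.le
    have : (∫ x in (0:ℝ)..q, (w x + k)) = (∫ x in (0:ℝ)..q, w x) + ∫ _x in (0:ℝ)..q, (k:ℝ) := by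
      exact intervalIntegral.integral_add hiw intervalIntegrable_const
    rw [hint, intervalIntegral.integral_const, smul_eq_mul] at this
    rw [hf₁ q ⟨hq.le, hqS.le⟩]
    nlinarith [this]
  have hmono2 : ∀ a b : ℝ, q ≤ a → a ≤ b → f a + k * a ≤ f b + k * b := by
    intro a b ha hab
    rcases le_or_gt b S with hb | hb
    · exact key2 a b ha hab hb
    · rcases le_or_gt a S with haS | haS
      · have h1 := key2 a S ha haS le_rfl
        have h2 := hf₂ b hb
        nlinarith
      · have h1 := hf₂ a haS
        have h2 := hf₂ b hb
        nlinarith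
  intro x y hx hxy
  rcases le_or_gt x q with hxq | hxq
  · have h1 : f x + k * x ≤ f 0 + k * 0 := key1 0 x le_rfl hx hxq
    have h2 : -K ≤ f y + k * y := by
      rcases le_or_gt y q with hyq | hyq
      · have := key1 y q (le_trans hx hxy.le) hyq le_rfl
        linarith [hfq]
      · have := hmono2 q y le_rfl hyq.le
        linarith [hfq]
    rw [hf0] at h1
    nlinarith
  · have := hmono2 x y hxq.le hxy.le
    nlinarith
end

section
/- Let ℓ > 0, L > 0, let 0 < Q < S, and let w : [0,S] → ℝ be continuous with w(x) ≤ ℓ for all x ∈ [0,Q], w(x) ≥ ℓ for all x ∈ [Q,S], and ∫_Q^S (w(x)−ℓ) dx = L. Define f : [0,∞) → ℝ by f(x) = ∫₀^x w(y) dy for x ∈ [0,S] and f(x) = f(S) + ℓ·(x − S) for x > S. Then for all 0 ≤ y < x: f(x) ≤ f(y) + L + ℓ·(x − y). -/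
open Set MeasureTheory Filter Topology

/-
Put `F x = f x - ℓ x`. Beyond `S` the function `F` is constant, so `F x - F y` equals
`F (min x S) - F (min y S) = ∫ (w - ℓ)` over `[min y S, min x S] ⊆ [0, S]`. The integrand is
`≤ 0` on `[0, Q]` and `≥ 0` on `[Q, S]`, so its integral over any subinterval of `[0, S]` is at
most its integral over `[Q, S]`, which is `L`.
-/

namespace intervalIntegral

variable {g : ℝ → ℝ} {p Q S a b : ℝ}

theorem integral_nonpos_of_forall (hab : a ≤ b) (hg : IntervalIntegrable g volume a b)
    (h : ∀ x ∈ Icc a b, g x ≤ 0) : ∫ x in a..b, g x ≤ 0 := by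
  simpa using integral_mono_on hab hg intervalIntegrable_const h

theorem integral_le_integral_of_sign_change (hpQ : p ≤ Q) (hQS : Q ≤ S)
    (hg : ContinuousOn g (Icc p S)) (hneg : ∀ x ∈ Icc p Q, g x ≤ 0)
    (hpos : ∀ x ∈ Icc Q S, 0 ≤ g x) (hpa : p ≤ a) (hab : a ≤ b) (hbS : b ≤ S) :
    ∫ x in a..b, g x ≤ ∫ x in Q..S, g x := by
  have hgi : ∀ c ∈ Icc p S, ∀ d ∈ Icc p S, IntervalIntegrable g volume c d :=
    fun c hc d hd => (hg.mono (uIcc_subset_Icc hc hd)).intervalIntegrable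
  have hQS_ae : 0 ≤ᵐ[volume.restrict (Ioc Q S)] g :=
    (ae_restrict_iff' measurableSet_Ioc).mpr <|
      ae_of_all _ fun x hx => hpos x (Ioc_subset_Icc_self hx)
  have hgiQS : IntervalIntegrable g volume Q S := hgi Q ⟨hpQ, hQS⟩ S ⟨hpQ.trans hQS, le_rfl⟩
  rcases le_total b Q with hbQ | hQb
  · calc ∫ x in a..b, g x
        ≤ 0 := integral_nonpos_of_forall hab
          (hgi a ⟨hpa, by linarith⟩ b ⟨by linarith, hbS⟩)
          fun x hx => hneg x ⟨hpa.trans hx.1, hx.2.trans hbQ⟩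
      _ ≤ ∫ x in Q..S, g x := integral_nonneg hQS hpos
  rcases le_total a Q with haQ | hQa
  · have hsplit : ∫ x in a..b, g x = (∫ x in a..Q, g x) + ∫ x in Q..b, g x :=
      (integral_add_adjacent_intervals (hgi a ⟨hpa, by linarith⟩ Q ⟨hpQ, hQS⟩)
        (hgi Q ⟨hpQ, hQS⟩ b ⟨by linarith, hbS⟩)).symm
    have hleft : ∫ x in a..Q, g x ≤ 0 :=
      integral_nonpos_of_forall haQ (hgi a ⟨hpa, by linarith⟩ Q ⟨hpQ, hQS⟩)
        fun x hx => hneg x ⟨hpa.trans hx.1, hx.2⟩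
    have hright : ∫ x in Q..b, g x ≤ ∫ x in Q..S, g x :=
      integral_mono_interval le_rfl hQb hbS hQS_ae hgiQS
    linarith
  · exact integral_mono_interval hQa hab hbS hQS_ae hgiQS

end intervalIntegral

theorem stmt_19_general (ℓ L Q S : ℝ)
    (hQ : 0 < Q) (hQS : Q < S) (w f : ℝ → ℝ)
    (hwcont : ContinuousOn w (Set.Icc 0 S))
    (hw₁ : ∀ x ∈ Set.Icc (0:ℝ) Q, w x ≤ ℓ)
    (hw₂ : ∀ x ∈ Set.Icc Q S, ℓ ≤ w x)
    (hint : (∫ x in Q..S, (w x - ℓ)) = L)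
    (hf₁ : ∀ x ∈ Set.Icc (0:ℝ) S, f x = ∫ y in (0:ℝ)..x, w y)
    (hf₂ : ∀ x : ℝ, S < x → f x = f S + ℓ * (x - S)) :
    ∀ y x : ℝ, 0 ≤ y → y < x → f x ≤ f y + L + ℓ * (x - y) := by
  have hS : 0 ≤ S := hQ.le.trans hQS.le
  have hwi : ∀ c ∈ Icc 0 S, ∀ d ∈ Icc 0 S, IntervalIntegrable w volume c d :=
    fun c hc d hd => (hwcont.mono (uIcc_subset_Icc hc hd)).intervalIntegrable
  have hstop : ∀ t, 0 ≤ t → f t - ℓ * t = f (min t S) - ℓ * min t S := by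
    intro t ht
    rcases le_or_gt t S with htS | hSt
    · rw [min_eq_left htS]
    · rw [min_eq_right hSt.le, hf₂ t hSt]; ring
  have hincr : ∀ a ∈ Icc 0 S, ∀ b ∈ Icc 0 S,
      f b - ℓ * b - (f a - ℓ * a) = ∫ x in a..b, (w x - ℓ) := by
    intro a ha b hb
    rw [intervalIntegral.integral_sub (hwi a ha b hb) intervalIntegrable_const,
      intervalIntegral.integral_const, hf₁ a ha, hf₁ b hb,
      ← intervalIntegral.integral_interval_sub_left (hwi 0 ⟨le_rfl, hS⟩ b hb)
        (hwi 0 ⟨le_rfl, hS⟩ a ha)]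
    simp only [smul_eq_mul]; ring
  intro y x hy hyx
  have hy' : min y S ∈ Icc 0 S := ⟨le_min hy hS, min_le_right _ _⟩
  have hx' : min x S ∈ Icc 0 S := ⟨le_min (hy.trans hyx.le) hS, min_le_right _ _⟩
  have hbound := intervalIntegral.integral_le_integral_of_sign_change (g := fun x => w x - ℓ)
    hQ.le hQS.le (hwcont.sub continuousOn_const) (fun x hx => sub_nonpos.mpr (hw₁ x hx))
    (fun x hx => sub_nonneg.mpr (hw₂ x hx)) hy'.1 (min_le_min_right S hyx.le) hx'.2
  have hdiff := hincr _ hy' _ hx'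
  have hFx := hstop x (hy.trans hyx.le)
  have hFy := hstop y hy
  linarith

theorem stmt_19 (ℓ L Q S : ℝ) (hℓ : 0 < ℓ) (hL : 0 < L)
    (hQ : 0 < Q) (hQS : Q < S) (w f : ℝ → ℝ)
    (hwcont : ContinuousOn w (Set.Icc 0 S))
    (hw₁ : ∀ x ∈ Set.Icc (0:ℝ) Q, w x ≤ ℓ)
    (hw₂ : ∀ x ∈ Set.Icc Q S, ℓ ≤ w x)
    (hint : (∫ x in Q..S, (w x - ℓ)) = L)
    (hf₁ : ∀ x ∈ Set.Icc (0:ℝ) S, f x = ∫ y in (0:ℝ)..x, w y)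
    (hf₂ : ∀ x : ℝ, S < x → f x = f S + ℓ * (x - S)) :
    ∀ y x : ℝ, 0 ≤ y → y < x → f x ≤ f y + L + ℓ * (x - y) :=
  stmt_19_general ℓ L Q S hQ hQS w f hwcont hw₁ hw₂ hint hf₁ hf₂
end
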